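/- arXiv:2501.02254 — 2 statements merged into one kernel-verified Lean document; each statement's English description precedes it below -/
import Mathlib

section
/- Let x* ∈ Ω ∩ C. If x* is a local minimizer of the fractional program (P), then (x*, 1/g(x*)) is a local min-max point of min_{x∈ℝⁿ} max_{c∈ℝ} F̃(x,c). Conversely, if (x*, c*) ∈ (Ω ∩ C) × ℝ is a local min-max point of this min-max problem, then x* is a local minimizer of (P). -/
open Filter Topology Set
open scoped Classical

noncomputable section

/-- `En n` is the Euclidean space `ℝⁿ`. -/
abbrev En (n : ℕ) := EuclideanSpace ℝ (Fin n)

variable {n : ℕ}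

/-- `Ω := {x : g x ≠ 0}`. -/
def Omeg (g : En n → ℝ) : Set (En n) := {x | g x ≠ 0}

/-- The extended objective `F` of the fractional program (P), with `h = h₁ - h₂`:
`F x = f x / g x + (h₁ x - h₂ x)` on `Ω ∩ C` and `+∞` elsewhere. -/
def Fobj (f g h₁ h₂ : En n → ℝ) (C : Set (En n)) (x : En n) : EReal :=
  if x ∈ Omeg g ∩ C then ((f x / g x + (h₁ x - h₂ x) : ℝ) : EReal) else ⊤

/-- The objective `F̃` of the min-max reformulation:
`F̃(x,c) = 2 c f x - c² f x g x + h x + ι_{Ω∩C}(x)`. -/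
def Ftil (f g h₁ h₂ : En n → ℝ) (C : Set (En n)) (x : En n) (c : ℝ) : EReal :=
  if x ∈ Omeg g ∩ C then
    ((2 * c * f x - c ^ 2 * f x * g x + (h₁ x - h₂ x) : ℝ) : EReal) else ⊤

/-- The Fréchet subdifferential of an extended-real-valued function on `ℝⁿ`. -/
def fsubdiff (φ : En n → EReal) (x : En n) : Set (En n) :=
  {y | φ x ≠ ⊤ ∧ ∀ ε : ℝ, 0 < ε →
      ∀ᶠ z in 𝓝 x, φ x + (((inner ℝ y (z - x) : ℝ) - ε * ‖z - x‖ : ℝ) : EReal) ≤ φ z}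

/-- The convex (classical) subdifferential of a real-valued function on `ℝⁿ`. -/
def convSubdiff (φ : En n → ℝ) (x : En n) : Set (En n) :=
  {y | ∀ z, φ x + (inner ℝ y (z - x) : ℝ) ≤ φ z}

/-- The convex subdifferential of an extended-real-valued function on `ℝⁿ`. -/
def eSubdiff (φ : En n → EReal) (x : En n) : Set (En n) :=
  {y | ∀ z, φ x + (((inner ℝ y (z - x) : ℝ)) : EReal) ≤ φ z}

/-- The convex conjugate of a real-valued function. -/
def conjF (φ : En n → ℝ) (y : En n) : EReal :=
  ⨆ x : En n, (((inner ℝ x y : ℝ) - φ x : ℝ) : EReal)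

/-- The auxiliary function `Q`. -/
def Qaux (f g h₁ h₂ : En n → ℝ) (C : Set (En n)) (x y z : En n) (c : ℝ) : EReal :=
  if x ∈ C ∧ conjF g y ≠ ⊤ ∧ conjF h₂ z ≠ ⊤ then
    ((2 * c * f x + c ^ 2 * f x * ((conjF g y).toReal - (inner ℝ x y : ℝ))
        + h₁ x + (conjF h₂ z).toReal - (inner ℝ x z : ℝ) : ℝ) : EReal)
  else ⊤

/-- The proximal operator (as a set) of `t • (f + ι_C)` at `v`. -/
def proxfC (f : En n → ℝ) (C : Set (En n)) (t : ℝ) (v : En n) : Set (En n) :=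
  {z | z ∈ C ∧ ∀ w ∈ C, t * f z + ‖v - z‖ ^ 2 / 2 ≤ t * f w + ‖v - w‖ ^ 2 / 2}

/-- The standing assumptions on the data of problem (P). -/
def StandingAssumptions (f g h₁ h₂ : En n → ℝ) (C : Set (En n)) : Prop :=
  (∀ x, 0 ≤ f x) ∧ (∀ x, 0 ≤ g x) ∧
  LowerSemicontinuous f ∧ LowerSemicontinuous g ∧
  LowerSemicontinuous (fun x => h₁ x - h₂ x) ∧
  IsClosed C ∧ (Omeg g ∩ C).Nonempty ∧
  (∀ x ∈ Omeg g, ∃ s ∈ 𝓝 x, ∃ K : NNReal, LipschitzOnWith K f s) ∧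
  ConvexOn ℝ univ g ∧ ConvexOn ℝ univ h₂ ∧
  (∀ x ∈ Omeg g, ∃ δ > 0, (∀ y ∈ Metric.ball x δ, HasGradientAt h₁ (gradient h₁ y) y) ∧
      ∃ K : NNReal, LipschitzOnWith K (gradient h₁) (Metric.ball x δ))

/-- An admissible run of the alternating maximization proximal descent algorithm (AMPDA),
including the backtracking line-search data: at iteration `k`, the trial points
`trial k j` are computed with stepsizes `αtil k * γ ^ j`, the trials `j < J k` fail the
acceptance test, and `x (k+1) = trial k (J k)` is accepted. -/
structure AMPDA (f g h₁ h₂ : En n → ℝ) (C : Set (En n)) (x0 : En n)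
    (αlo αhi σ γ : ℝ) : Type where
  x : ℕ → En n
  y : ℕ → En n
  z : ℕ → En n
  c : ℕ → ℝ
  αtil : ℕ → ℝ
  J : ℕ → ℕ
  trial : ℕ → ℕ → En n
  hx0 : x 0 = x0
  hc : ∀ k, c k = 1 / g (x k)
  hy : ∀ k, y k ∈ convSubdiff g (x k)
  hz : ∀ k, z k ∈ convSubdiff h₂ (x k)
  hαtil : ∀ k, αlo ≤ αtil k ∧ αtil k ≤ αhi
  htrial : ∀ k j, trial k j ∈ proxfC f C (αtil k * γ ^ j * c k)
      (x k - (αtil k * γ ^ j) • (gradient h₁ (x k) - z k - (c k ^ 2 * f (x k)) • y k))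
  hfail : ∀ k, ∀ j < J k, ¬ (trial k j ∈ Omeg g ∧
      Qaux f g h₁ h₂ C (trial k j) (y k) (z k) (1 / g (trial k j))
          + ((σ / 2 * ‖trial k j - x k‖ ^ 2 : ℝ) : EReal)
        ≤ Fobj f g h₁ h₂ C (x k))
  hstep : ∀ k, x (k + 1) = trial k (J k)
  hmem : ∀ k, x (k + 1) ∈ Omeg g
  haccept : ∀ k,
      Qaux f g h₁ h₂ C (x (k + 1)) (y k) (z k) (1 / g (x (k + 1)))
          + ((σ / 2 * ‖x (k + 1) - x k‖ ^ 2 : ℝ) : EReal)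
        ≤ Fobj f g h₁ h₂ C (x k)

/-- The accepted stepsize `α_k` of AMPDA at iteration `k`. -/
def AMPDA.step {f g h₁ h₂ : En n → ℝ} {C : Set (En n)} {x0 : En n} {αlo αhi σ γ : ℝ}
    (A : AMPDA f g h₁ h₂ C x0 αlo αhi σ γ) (k : ℕ) : ℝ := A.αtil k * γ ^ A.J k

/-- `x⋆` is a critical point of `F`. -/
def isCriticalPt (f g h₁ h₂ : En n → ℝ) (C : Set (En n)) (xs : En n) : Prop :=
  g xs ≠ 0 ∧
  ∃ u ∈ fsubdiff (fun x : En n => if x ∈ C then (((1 / g xs) * f x : ℝ) : EReal) else ⊤) xs,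
  ∃ ys ∈ convSubdiff g xs, ∃ zs ∈ convSubdiff h₂ xs,
    (0 : En n) = u - ((1 / g xs) ^ 2 * f xs) • ys + gradient h₁ xs - zs

/-- `xb` is an `ε`-critical point of `F`. -/
def epsCrit (f g h₁ h₂ : En n → ℝ) (C : Set (En n)) (ε : ℝ) (xb : En n) : Prop :=
  g xb ≠ 0 ∧ ∃ α : ℝ, 0 < α ∧ ∃ yb ∈ convSubdiff g xb, ∃ zb ∈ convSubdiff h₂ xb,
    (proxfC f C (α * (1 / g xb))
        (xb - α • (gradient h₁ xb - zb - ((1 / g xb) ^ 2 * f xb) • yb))).Nonempty ∧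
    Metric.infDist xb (proxfC f C (α * (1 / g xb))
        (xb - α • (gradient h₁ xb - zb - ((1 / g xb) ^ 2 * f xb) • yb))) ≤ ε

/-- The product space `ℝⁿ × ℝⁿ × ℝⁿ × ℝ` on which `Q` lives. -/
abbrev E4 (n : ℕ) := En n × En n × En n × ℝ

/-- The natural inner product on `ℝⁿ × ℝⁿ × ℝⁿ × ℝ`. -/
def inner4 (v w : E4 n) : ℝ :=
  (inner ℝ v.1 w.1 : ℝ) + (inner ℝ v.2.1 w.2.1 : ℝ) + (inner ℝ v.2.2.1 w.2.2.1 : ℝ)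
    + v.2.2.2 * w.2.2.2

/-- The Fréchet subdifferential of an extended-real-valued function on
`ℝⁿ × ℝⁿ × ℝⁿ × ℝ`. -/
def fsubdiff4 (φ : E4 n → EReal) (w : E4 n) : Set (E4 n) :=
  {v | φ w ≠ ⊤ ∧ ∀ ε : ℝ, 0 < ε →
      ∀ᶠ u in 𝓝 w, φ w + ((inner4 v (u - w) - ε * ‖u - w‖ : ℝ) : EReal) ≤ φ u}

/-- The limiting subdifferential of an extended-real-valued function on
`ℝⁿ × ℝⁿ × ℝⁿ × ℝ`. -/
def lsubdiff4 (φ : E4 n → EReal) (w : E4 n) : Set (E4 n) :=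
  {v | ∃ (u : ℕ → E4 n) (q : ℕ → E4 n), Tendsto u atTop (𝓝 w) ∧
      Tendsto (fun k => φ (u k)) atTop (𝓝 (φ w)) ∧ Tendsto q atTop (𝓝 v) ∧
      ∀ k, q k ∈ fsubdiff4 φ (u k)}

/-- The function `Q` as a function on the product space. -/
def QfunOf (f g h₁ h₂ : En n → ℝ) (C : Set (En n)) : E4 n → EReal :=
  fun w => Qaux f g h₁ h₂ C w.1 w.2.1 w.2.2.1 w.2.2.2

/-- The Kurdyka-Łojasiewicz property of `φ` at `w`. -/
def KLAt4 (φ : E4 n → EReal) (w : E4 n) : Prop :=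
  ∃ ε : EReal, 0 < ε ∧ ∃ δ : ℝ, 0 < δ ∧ ∃ ψ ψ' : ℝ → ℝ,
    ψ 0 = 0 ∧
    ContinuousOn ψ {t : ℝ | 0 ≤ t ∧ (t : EReal) < ε} ∧
    ConcaveOn ℝ {t : ℝ | 0 ≤ t ∧ (t : EReal) < ε} ψ ∧
    (∀ t : ℝ, 0 < t → (t : EReal) < ε → HasDerivAt ψ (ψ' t) t ∧ 0 < ψ' t) ∧
    ∀ u : E4 n, ‖u - w‖ < δ → φ w < φ u → φ u < φ w + ε →
      ∀ p ∈ lsubdiff4 φ u, 1 ≤ ψ' ((φ u - φ w).toReal) * ‖p‖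

/-- The ℓ¹-norm on `ℝⁿ`. -/
def l1 (x : En n) : ℝ := ∑ i, |x i|

/-- The ℓ²-norm on `ℝⁿ`. -/
def l2 (x : En n) : ℝ := ‖x‖

/-- `S_μ`, the set of vectors with at most `μ` nonzero entries. -/
def Smu (μ : ℕ) : Set (En n) := {z | {j | z j ≠ 0}.ncard ≤ μ}

/-- `h₁` for the robust signal recovery models: `(λ/2) ‖A x - b‖²`. -/
def h1L {m : ℕ} (A : En n →ₗ[ℝ] En m) (b : En m) (lam : ℝ) (x : En n) : ℝ :=
  lam / 2 * ‖A x - b‖ ^ 2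

/-- `h₂` for the robust signal recovery models:
`(λ/2) ‖T_μ (A x - b)‖² = (λ/2) (‖A x - b‖² - dist²(A x - b, S_μ))`. -/
def h2L {m : ℕ} (A : En n →ₗ[ℝ] En m) (b : En m) (lam : ℝ) (μ : ℕ) (x : En n) : ℝ :=
  lam / 2 * (‖A x - b‖ ^ 2 - (Metric.infDist (A x - b) (Smu μ)) ^ 2)

/-- The box constraint `{x : x̲ ≤ x ≤ x̄}`. -/
def box (xlo xhi : En n) : Set (En n) := {x | ∀ i, xlo i ≤ x i ∧ x i ≤ xhi i}

/-!
For `f x ≥ 0` and `g x > 0`, `c ↦ F̃(x, c)` is a concave quadratic maximized at `c = 1 / g x`,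
with maximum value `F x`; hence `F̃ ≤ F`, with equality at `c = 1 / g x`. If `x⋆` is a local
minimizer of `F`, continuity of the convex function `g` keeps `1 / g x` in every window
`|c - 1 / g x⋆| ≤ ε` for `x` near `x⋆`, so `φ_ε x ≥ F x ≥ F x⋆ ≥ φ_ε x⋆`. Conversely, at a
local min-max point `(x⋆, c⋆)` the quadratic is stationary at `c⋆`, which forces
`F̃(x⋆, c⋆) = F x⋆`, and then `F x⋆ ≤ φ_ε x⋆ ≤ φ_ε x ≤ F x`.
-/

lemma two_mul_mul_sub_sq_mul_mul_le_div {a b c : ℝ} (ha : 0 ≤ a) (hb : 0 < b) :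
    2 * c * a - c ^ 2 * a * b ≤ a / b := by
  have hgap : a / b - (2 * c * a - c ^ 2 * a * b) = a * (1 - c * b) ^ 2 / b := by
    field_simp
    ring
  have : 0 ≤ a * (1 - c * b) ^ 2 / b := by positivity
  linarith

lemma eq_mul_of_isLocalMax_quadratic {a b k cs : ℝ}
    (h : IsLocalMax (fun c : ℝ => 2 * c * a - c ^ 2 * b + k) cs) : a = cs * b := by
  have hderiv : HasDerivAt (fun c : ℝ => 2 * c * a - c ^ 2 * b + k) (2 * a - 2 * cs * b) cs := by
    have hsq : HasDerivAt (fun c : ℝ => c ^ 2) (2 * cs) cs := by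
      simpa using hasDerivAt_pow 2 cs
    exact ((((hasDerivAt_id' cs).const_mul 2).mul_const a).sub
      (hsq.mul_const b)).add_const k |>.congr_deriv (by ring)
  linarith [h.hasDerivAt_eq_zero hderiv]

section MinMax

variable {f g h₁ h₂ : En n → ℝ} {C : Set (En n)}

def phiEps (f g h₁ h₂ : En n → ℝ) (C : Set (En n)) (cs ε : ℝ) (x : En n) : EReal :=
  ⨆ c : ℝ, ⨆ (_ : |c - cs| ≤ ε), Ftil f g h₁ h₂ C x c

def IsLocalMinMax (f g h₁ h₂ : En n → ℝ) (C : Set (En n)) (xs : En n) (cs : ℝ) : Prop :=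
  (∃ ρ > 0, ∀ c : ℝ, |c - cs| < ρ → Ftil f g h₁ h₂ C xs c ≤ Ftil f g h₁ h₂ C xs cs) ∧
  ∃ ε₀ > 0, ∀ ε : ℝ, 0 < ε → ε ≤ ε₀ → ∃ δ > 0, ∀ x ∈ Metric.ball xs δ ∩ (Omeg g ∩ C),
    phiEps f g h₁ h₂ C cs ε xs ≤ phiEps f g h₁ h₂ C cs ε x

lemma Ftil_le_Fobj {x : En n} (hf : 0 ≤ f x) (hg : 0 ≤ g x) (c : ℝ) :
    Ftil f g h₁ h₂ C x c ≤ Fobj f g h₁ h₂ C x := by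
  unfold Ftil Fobj
  split_ifs with hx
  · have hgx : 0 < g x := lt_of_le_of_ne hg (Ne.symm hx.1)
    exact EReal.coe_le_coe_iff.mpr
      (by linarith [two_mul_mul_sub_sq_mul_mul_le_div (c := c) hf hgx])
  · exact le_rfl

lemma Ftil_one_div_eq_Fobj (x : En n) :
    Ftil f g h₁ h₂ C x (1 / g x) = Fobj f g h₁ h₂ C x := by
  unfold Ftil Fobj
  split_ifs with hx
  · have hgx : g x ≠ 0 := hx.1
    congr 1
    field_simp
    ring
  · rfl

lemma Ftil_eq_Fobj_of_isLocalMax {xs : En n} {cs : ℝ} (hxs : xs ∈ Omeg g ∩ C)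
    (hmax : IsLocalMax (Ftil f g h₁ h₂ C xs) cs) :
    Ftil f g h₁ h₂ C xs cs = Fobj f g h₁ h₂ C xs := by
  have hquad : IsLocalMax
      (fun c : ℝ => 2 * c * f xs - c ^ 2 * (f xs * g xs) + (h₁ xs - h₂ xs)) cs := by
    filter_upwards [hmax] with c hc
    simp only [Ftil, if_pos hxs, EReal.coe_le_coe_iff] at hc
    linarith
  have hstat : f xs = cs * (f xs * g xs) := eq_mul_of_isLocalMax_quadratic hquad
  have hgxs : g xs ≠ 0 := hxs.1
  have hquot : f xs / g xs = cs * f xs := by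
    rw [div_eq_iff hgxs]
    linear_combination hstat
  rw [Ftil, Fobj, if_pos hxs, if_pos hxs, EReal.coe_eq_coe_iff, hquot]
  linear_combination cs * hstat

lemma phiEps_le_Fobj {x : En n} (hf : 0 ≤ f x) (hg : 0 ≤ g x) (cs ε : ℝ) :
    phiEps f g h₁ h₂ C cs ε x ≤ Fobj f g h₁ h₂ C x :=
  iSup₂_le fun c _ => Ftil_le_Fobj hf hg c

lemma Ftil_le_phiEps (x : En n) {cs ε : ℝ} (hε : 0 ≤ ε) :
    Ftil f g h₁ h₂ C x cs ≤ phiEps f g h₁ h₂ C cs ε x :=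
  le_iSup₂_of_le (f := fun c (_ : |c - cs| ≤ ε) => Ftil f g h₁ h₂ C x c) cs
    (by simpa using hε) le_rfl

lemma Fobj_le_phiEps {x : En n} {cs ε : ℝ} (hx : |1 / g x - cs| ≤ ε) :
    Fobj f g h₁ h₂ C x ≤ phiEps f g h₁ h₂ C cs ε x := by
  rw [← Ftil_one_div_eq_Fobj]
  exact le_iSup₂_of_le (f := fun c (_ : |c - cs| ≤ ε) => Ftil f g h₁ h₂ C x c) (1 / g x) hx le_rfl

theorem isLocalMinMax_of_localMin (hf : ∀ x, 0 ≤ f x) (hg : ∀ x, 0 ≤ g x) {xs : En n}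
    (hgc : ContinuousAt g xs) (hxs : xs ∈ Omeg g ∩ C)
    (hmin : ∃ δ > 0, ∀ x ∈ Metric.ball xs δ ∩ (Omeg g ∩ C),
      Fobj f g h₁ h₂ C xs ≤ Fobj f g h₁ h₂ C x) :
    IsLocalMinMax f g h₁ h₂ C xs (1 / g xs) := by
  obtain ⟨δ₀, hδ₀, hmin⟩ := hmin
  refine ⟨⟨1, one_pos, fun c _ => ?_⟩, ⟨1, one_pos, fun ε hε _ => ?_⟩⟩
  · rw [Ftil_one_div_eq_Fobj]
    exact Ftil_le_Fobj (hf xs) (hg xs) c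
  · have hinv : ContinuousAt (fun x => 1 / g x) xs := continuousAt_const.div hgc hxs.1
    obtain ⟨δ₁, hδ₁, hclose⟩ := Metric.eventually_nhds_iff.mp (Metric.tendsto_nhds.mp hinv ε hε)
    refine ⟨min δ₀ δ₁, lt_min hδ₀ hδ₁, fun x ⟨hxball, hx⟩ => ?_⟩
    rw [Metric.mem_ball, lt_min_iff] at hxball
    calc phiEps f g h₁ h₂ C (1 / g xs) ε xs
        ≤ Fobj f g h₁ h₂ C xs := phiEps_le_Fobj (hf xs) (hg xs) _ _
      _ ≤ Fobj f g h₁ h₂ C x := hmin x ⟨Metric.mem_ball.mpr hxball.1, hx⟩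
      _ ≤ phiEps f g h₁ h₂ C (1 / g xs) ε x := Fobj_le_phiEps (hclose hxball.2).le

theorem localMin_of_isLocalMinMax (hf : ∀ x, 0 ≤ f x) (hg : ∀ x, 0 ≤ g x) {xs : En n}
    {cs : ℝ} (hxs : xs ∈ Omeg g ∩ C) (h : IsLocalMinMax f g h₁ h₂ C xs cs) :
    ∃ δ > 0, ∀ x ∈ Metric.ball xs δ ∩ (Omeg g ∩ C),
      Fobj f g h₁ h₂ C xs ≤ Fobj f g h₁ h₂ C x := by
  obtain ⟨⟨ρ, hρ, hmax⟩, ε₀, hε₀, hwin⟩ := h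
  have hlocmax : IsLocalMax (Ftil f g h₁ h₂ C xs) cs :=
    Metric.eventually_nhds_iff.mpr ⟨ρ, hρ, fun c hc => hmax c (Real.dist_eq c cs ▸ hc)⟩
  obtain ⟨δ, hδ, hwin⟩ := hwin ε₀ hε₀ le_rfl
  refine ⟨δ, hδ, fun x hx => ?_⟩
  calc Fobj f g h₁ h₂ C xs
        = Ftil f g h₁ h₂ C xs cs := (Ftil_eq_Fobj_of_isLocalMax hxs hlocmax).symm
    _ ≤ phiEps f g h₁ h₂ C cs ε₀ xs := Ftil_le_phiEps xs hε₀.le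
    _ ≤ phiEps f g h₁ h₂ C cs ε₀ x := hwin x hx
    _ ≤ Fobj f g h₁ h₂ C x := phiEps_le_Fobj (hf x) (hg x) _ _

end MinMax

/-- equivalence of local minimizers of (P) and local min-max points of the
min-max reformulation. -/
theorem statement1 (f g h₁ h₂ : En n → ℝ) (C : Set (En n))
    (hSA : StandingAssumptions f g h₁ h₂ C)
    (xs : En n) (hxs : xs ∈ Omeg g ∩ C) :
    ((∃ δ > 0, ∀ x ∈ Metric.ball xs δ ∩ (Omeg g ∩ C),
        Fobj f g h₁ h₂ C xs ≤ Fobj f g h₁ h₂ C x) →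
      ((∃ ρ > 0, ∀ c : ℝ, |c - 1 / g xs| < ρ →
          Ftil f g h₁ h₂ C xs c ≤ Ftil f g h₁ h₂ C xs (1 / g xs)) ∧
       (∃ ε₀ > 0, ∀ ε : ℝ, 0 < ε → ε ≤ ε₀ → ∃ δ > 0,
          ∀ x ∈ Metric.ball xs δ ∩ (Omeg g ∩ C),
            (⨆ c : ℝ, ⨆ (_ : |c - 1 / g xs| ≤ ε), Ftil f g h₁ h₂ C xs c) ≤
              ⨆ c : ℝ, ⨆ (_ : |c - 1 / g xs| ≤ ε), Ftil f g h₁ h₂ C x c))) ∧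
    (∀ cs : ℝ,
      ((∃ ρ > 0, ∀ c : ℝ, |c - cs| < ρ →
          Ftil f g h₁ h₂ C xs c ≤ Ftil f g h₁ h₂ C xs cs) ∧
       (∃ ε₀ > 0, ∀ ε : ℝ, 0 < ε → ε ≤ ε₀ → ∃ δ > 0,
          ∀ x ∈ Metric.ball xs δ ∩ (Omeg g ∩ C),
            (⨆ c : ℝ, ⨆ (_ : |c - cs| ≤ ε), Ftil f g h₁ h₂ C xs c) ≤
              ⨆ c : ℝ, ⨆ (_ : |c - cs| ≤ ε), Ftil f g h₁ h₂ C x c)) →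
      ∃ δ > 0, ∀ x ∈ Metric.ball xs δ ∩ (Omeg g ∩ C),
        Fobj f g h₁ h₂ C xs ≤ Fobj f g h₁ h₂ C x) := by
  obtain ⟨hf, hg, -, -, -, -, -, -, hgconv, -, -⟩ := hSA
  have hgc : ContinuousAt g xs := (hgconv.continuousOn isOpen_univ).continuousAt univ_mem
  exact ⟨isLocalMinMax_of_localMin hf hg hgc hxs, fun _ => localMin_of_isLocalMinMax hf hg hxs⟩
end
end

section
/- Suppose the level set X := {x ∈ dom F : F(x) ≤ F(x⁰)} is compact, and let {x^k} be generated by AMPDA with F_∞ := lim_{k→∞} F(x^k). Then for every ε > 0 there exists an index k̂ ≤ K := 2(F(x⁰) − F_∞)/(σ ε²) such that x^{k̂} is an ε-critical point of F; i.e., AMPDA finds an ε-critical point within O(ε⁻²) iterations. -/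
open Filter Topology Set
open scoped Classical

noncomputable section

variable {n : ℕ}

/-! Since `F ≤ Q(·, y, z, 1/g(·))` (Fenchel–Young for `g` and `h₂`, using `f ≥ 0`), the acceptance
test of the line search is a sufficient-descent inequality
`F(x^{k+1}) + (σ/2)‖x^{k+1} - x^k‖² ≤ F(x^k)`. Summing it over the first `⌊K⌋ + 1` iterations
forces some step `‖x^{k+1} - x^k‖` to be at most `ε`, and `x^{k+1}` is a point of the proximal
set in the definition of `ε`-criticality at `x^k`. -/

theorem inner_sub_le_toReal_conjF {φ : En n → ℝ} {y : En n} (hy : conjF φ y ≠ ⊤) (x : En n) :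
    inner ℝ x y - φ x ≤ (conjF φ y).toReal := by
  have h := le_iSup (fun x : En n => ((inner ℝ x y - φ x : ℝ) : EReal)) x
  have h' := EReal.toReal_le_toReal h (EReal.coe_ne_bot _) hy
  rwa [EReal.toReal_coe] at h'

theorem Fobj_le_Qaux {f g h₁ h₂ : En n → ℝ} {C : Set (En n)} {x : En n} (y z : En n)
    (hf : 0 ≤ f x) (hx : x ∈ Omeg g) :
    Fobj f g h₁ h₂ C x ≤ Qaux f g h₁ h₂ C x y z (1 / g x) := by
  unfold Qaux
  split_ifs with h
  · obtain ⟨hC, hy, hz⟩ := h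
    rw [Fobj, if_pos ⟨hx, hC⟩, EReal.coe_le_coe_iff]
    have hgy := inner_sub_le_toReal_conjF hy x
    have hhz := inner_sub_le_toReal_conjF hz x
    have hx' : g x ≠ 0 := hx
    have hfrac : f x / g x = 2 * (1 / g x) * f x - (1 / g x) ^ 2 * f x * g x := by
      field_simp
      ring
    nlinarith [mul_nonneg (mul_nonneg (sq_nonneg (1 / g x)) hf)
      (by linarith : 0 ≤ (conjF g y).toReal - inner ℝ x y + g x)]
  · exact le_top

theorem exists_le_of_sufficient_descent {φ d : ℕ → ℝ} {σ L ε : ℝ} (hσ : 0 < σ) (hε : 0 < ε)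
    (hdesc : ∀ k, φ (k + 1) + σ / 2 * d k ^ 2 ≤ φ k) (hL : ∀ k, L ≤ φ k) :
    ∃ k : ℕ, (k : ℝ) ≤ 2 * (φ 0 - L) / (σ * ε ^ 2) ∧ d k ≤ ε := by
  set K := 2 * (φ 0 - L) / (σ * ε ^ 2)
  have hK : 0 ≤ K := div_nonneg (by linarith [hL 0]) (by positivity)
  suffices ∃ k < ⌊K⌋₊ + 1, d k ≤ ε by
    obtain ⟨k, hkN, hk⟩ := this
    refine ⟨k, le_trans ?_ (Nat.floor_le hK), hk⟩
    exact_mod_cast Nat.lt_succ_iff.mp hkN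
  by_contra! hbig
  set N := ⌊K⌋₊ + 1
  have htotal : σ / 2 * (N * ε ^ 2) ≤ φ 0 - L :=
    calc σ / 2 * (N * ε ^ 2) = ∑ _k ∈ Finset.range N, σ / 2 * ε ^ 2 := by
          rw [Finset.sum_const, Finset.card_range, nsmul_eq_mul]; ring
      _ ≤ ∑ k ∈ Finset.range N, (φ k - φ (k + 1)) := by
        refine Finset.sum_le_sum fun k hk => ?_
        have hsq : ε ^ 2 ≤ d k ^ 2 :=
          pow_le_pow_left₀ hε.le (hbig k (Finset.mem_range.mp hk)).le 2
        nlinarith [hdesc k]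
      _ = φ 0 - φ N := Finset.sum_range_sub' φ N
      _ ≤ φ 0 - L := by linarith [hL N]
  have hNK : (N : ℝ) ≤ K := by
    rw [le_div_iff₀ (by positivity)]
    linarith
  have := Nat.lt_floor_add_one K
  push_cast [N] at hNK
  linarith

namespace AMPDA

variable {f g h₁ h₂ : En n → ℝ} {C : Set (En n)} {x0 : En n} {αlo αhi σ γ : ℝ}
  (A : AMPDA f g h₁ h₂ C x0 αlo αhi σ γ)

theorem Fobj_succ_add_le (hf : ∀ x, 0 ≤ f x) (k : ℕ) :
    Fobj f g h₁ h₂ C (A.x (k + 1)) + ((σ / 2 * ‖A.x (k + 1) - A.x k‖ ^ 2 : ℝ) : EReal)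
      ≤ Fobj f g h₁ h₂ C (A.x k) :=
  (add_le_add_left (Fobj_le_Qaux _ _ (hf _) (A.hmem k)) _).trans (A.haccept k)

theorem antitone_Fobj (hf : ∀ x, 0 ≤ f x) (hσ : 0 ≤ σ) :
    Antitone fun k => Fobj f g h₁ h₂ C (A.x k) :=
  antitone_nat_of_succ_le fun k =>
    le_trans (le_add_of_nonneg_right (EReal.coe_nonneg.mpr (by positivity)))
      (A.Fobj_succ_add_le hf k)

theorem mem_omeg_inter (hf : ∀ x, 0 ≤ f x) (hx0 : x0 ∈ Omeg g ∩ C) (k : ℕ) :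
    A.x k ∈ Omeg g ∩ C := by
  induction k with
  | zero => rw [A.hx0]; exact hx0
  | succ k ih =>
    by_contra hk
    have h := A.Fobj_succ_add_le hf k
    rw [Fobj, if_neg hk, Fobj, if_pos ih, EReal.top_add_of_ne_bot (EReal.coe_ne_bot _)] at h
    exact (EReal.coe_lt_top _).not_ge h

theorem step_pos (hαlo : 0 < αlo) (hγ0 : 0 < γ) (k : ℕ) : 0 < A.step k :=
  mul_pos (hαlo.trans_le (A.hαtil k).1) (pow_pos hγ0 _)

theorem epsCrit_of_norm_sub_le (hαlo : 0 < αlo) (hγ0 : 0 < γ) {k : ℕ} (hk : A.x k ∈ Omeg g)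
    {ε : ℝ} (hε : ‖A.x (k + 1) - A.x k‖ ≤ ε) : epsCrit f g h₁ h₂ C ε (A.x k) := by
  have hprox := A.htrial k (A.J k)
  rw [A.hc k, ← A.hstep k] at hprox
  refine ⟨hk, A.step k, A.step_pos hαlo hγ0 k, A.y k, A.hy k, A.z k, A.hz k, ⟨_, hprox⟩, ?_⟩
  calc Metric.infDist (A.x k) _ ≤ dist (A.x k) (A.x (k + 1)) :=
        Metric.infDist_le_dist_of_mem hprox
    _ ≤ ε := by rwa [dist_comm, dist_eq_norm]

end AMPDA

theorem statement9_general (f g h₁ h₂ : En n → ℝ) (C : Set (En n))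
    (hSA : StandingAssumptions f g h₁ h₂ C)
    (x0 : En n) (hx0 : x0 ∈ Omeg g ∩ C)
    (αlo αhi σ γ : ℝ) (hαlo : 0 < αlo)
    (hσ : 0 < σ) (hγ0 : 0 < γ)
    (A : AMPDA f g h₁ h₂ C x0 αlo αhi σ γ)
    (Finf : ℝ)
    (hFinf : Tendsto (fun k => Fobj f g h₁ h₂ C (A.x k)) atTop (𝓝 ((Finf : ℝ) : EReal))) :
    ∀ ε : ℝ, 0 < ε → ∃ khat : ℕ,
      (khat : ℝ) ≤ 2 * ((f x0 / g x0 + (h₁ x0 - h₂ x0)) - Finf) / (σ * ε ^ 2) ∧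
      epsCrit f g h₁ h₂ C ε (A.x khat) := by
  intro ε hε
  have hf := hSA.1
  have hmem := A.mem_omeg_inter hf hx0
  set φ : ℕ → ℝ := fun k => f (A.x k) / g (A.x k) + (h₁ (A.x k) - h₂ (A.x k))
  have hFφ : ∀ k, Fobj f g h₁ h₂ C (A.x k) = φ k := fun k => if_pos (hmem k)
  have hdesc : ∀ k, φ (k + 1) + σ / 2 * ‖A.x (k + 1) - A.x k‖ ^ 2 ≤ φ k := fun k => by
    have h := A.Fobj_succ_add_le hf k
    rwa [hFφ, hFφ, ← EReal.coe_add, EReal.coe_le_coe_iff] at h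
  have hlb : ∀ k, Finf ≤ φ k := fun k => by
    have h := (A.antitone_Fobj hf hσ.le).le_of_tendsto hFinf k
    rwa [hFφ, EReal.coe_le_coe_iff] at h
  obtain ⟨k, hkK, hkε⟩ := exists_le_of_sufficient_descent hσ hε hdesc hlb
  refine ⟨k, ?_, A.epsCrit_of_norm_sub_le hαlo hγ0 (hmem k).1 hkε⟩
  simpa [φ, A.hx0] using hkK

/-- iteration complexity of AMPDA: for every `ε > 0` there is an index
`k̂ ≤ K = 2 (F(x⁰) - F_∞) / (σ ε²)` such that `x^{k̂}` is an `ε`-critical point of `F`. -/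
theorem statement9 (f g h₁ h₂ : En n → ℝ) (C : Set (En n))
    (hSA : StandingAssumptions f g h₁ h₂ C)
    (x0 : En n) (hx0 : x0 ∈ Omeg g ∩ C)
    (αlo αhi σ γ : ℝ) (hαlo : 0 < αlo) (hαhi : αlo ≤ αhi)
    (hσ : 0 < σ) (hγ0 : 0 < γ) (hγ1 : γ < 1)
    (hcomp : IsCompact {x : En n | Fobj f g h₁ h₂ C x ≤ Fobj f g h₁ h₂ C x0})
    (A : AMPDA f g h₁ h₂ C x0 αlo αhi σ γ)
    (Finf : ℝ)
    (hFinf : Tendsto (fun k => Fobj f g h₁ h₂ C (A.x k)) atTop (𝓝 ((Finf : ℝ) : EReal))) :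
    ∀ ε : ℝ, 0 < ε → ∃ khat : ℕ,
      (khat : ℝ) ≤ 2 * ((f x0 / g x0 + (h₁ x0 - h₂ x0)) - Finf) / (σ * ε ^ 2) ∧
      epsCrit f g h₁ h₂ C ε (A.x khat) :=
  statement9_general f g h₁ h₂ C hSA x0 hx0 αlo αhi σ γ hαlo hσ hγ0 A Finf hFinf
end
end
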